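/- Let K ∈ ℝ³ˣ³ be symmetric with distinct eigenvalues ordered appropriately and with tr(K)I₃ − K positive definite, and let ℓ_R := λ_min(tr(K)I₃ − K) > 0. Then on the sublevel set S := {R ∈ SO(3) : Ψ_K(R) < ℓ_R}, the only critical point of Ψ_K (i.e., the only R with skew(K R) = 0) is R = I₃. -/

import Mathlib

open Matrix

noncomputable section

/-- Skew-symmetric part: skew(A) = (A − Aᵀ)/2. -/
def skewPart (A : Matrix (Fin 3) (Fin 3) ℝ) : Matrix (Fin 3) (Fin 3) ℝ :=
  (1 / 2 : ℝ) • (A - A.transpose)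

/-- SO(3): 3×3 real orthogonal matrices with determinant 1. -/
def SO3 : Set (Matrix (Fin 3) (Fin 3) ℝ) :=
  {R | R.transpose * R = 1 ∧ R.det = 1}

/-- Navigation function Ψ_K(R) = (1/2) tr(K(I₃ − R)). -/
def PsiK (K R : Matrix (Fin 3) (Fin 3) ℝ) : ℝ :=
  (1 / 2) * (K * (1 - R)).trace

/-!
Conjugating by an orthonormal eigenbasis of `K` replaces `K` by `diag(d)` and `R` by some
`S ∈ SO(3)` with `diag(d) S` symmetric and the same value of `Ψ`. Orthogonality of `S` then also
gives `S diag(d) = diag(d) Sᵀ`, and comparing entries yields `(dᵢ + dⱼ)(Sᵢⱼ - Sⱼᵢ) = 0` and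
`(dᵢ - dⱼ) Sᵢⱼ = 0`. As `dᵢ + dⱼ = tr K - dₖ > 0` and `dᵢ ≠ dⱼ`, `S` is diagonal with entries `±1`
and determinant `1`: either `S = I`, or `S` is the rotation by `π` about the `k`-th eigenvector,
where `Ψ = tr K - dₖ`. That value is an eigenvalue of `tr(K) I - K`, hence at least `ℓ_R`.
-/

namespace Matrix

variable {n R : Type*} [Fintype n]

theorem IsSymm.transpose_mul_mul [CommSemiring R] {A : Matrix n n R} (hA : A.IsSymm)
    (Q : Matrix n n R) : (Qᵀ * A * Q).IsSymm := by
  simp only [IsSymm, transpose_mul, transpose_transpose, hA.eq, Matrix.mul_assoc]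

theorem transpose_mul_mul_mul_transpose_mul_mul [DecidableEq n] [Semiring R] {Q : Matrix n n R}
    (hQ : Q * Qᵀ = 1) (A B : Matrix n n R) : Qᵀ * A * Q * (Qᵀ * B * Q) = Qᵀ * (A * B) * Q := by
  simp only [Matrix.mul_assoc]
  rw [← Matrix.mul_assoc Q, hQ, Matrix.one_mul]

theorem isDiag_of_isSymm_diagonal_mul [DecidableEq n] [CommRing R] [NoZeroDivisors R]
    {d : n → R} (hd : Function.Injective d) (hsum : ∀ i j, i ≠ j → d i + d j ≠ 0) {S : Matrix n n R}
    (hS : S * Sᵀ = 1) (hsymm : (diagonal d * S).IsSymm) : S.IsDiag := by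
  have hleft : Sᵀ * diagonal d = diagonal d * S := by
    simpa [transpose_mul] using hsymm.eq
  have hright : S * diagonal d = diagonal d * Sᵀ :=
    calc S * diagonal d = S * diagonal d * (S * Sᵀ) := by rw [hS, Matrix.mul_one]
      _ = S * (diagonal d * S) * Sᵀ := by simp only [Matrix.mul_assoc]
      _ = (S * Sᵀ) * diagonal d * Sᵀ := by rw [← hleft]; simp only [Matrix.mul_assoc]
      _ = diagonal d * Sᵀ := by rw [hS, Matrix.one_mul]
  intro i j hij
  have e₁ : S j i * d j = d i * S i j := by
    simpa [mul_diagonal, diagonal_mul] using congrFun (congrFun hleft i) j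
  have e₂ : S i j * d j = d i * S j i := by
    simpa [mul_diagonal, diagonal_mul] using congrFun (congrFun hright i) j
  have hsymm_ij : S i j = S j i := by
    have : (d i + d j) * (S i j - S j i) = 0 := by linear_combination e₂ - e₁
    exact sub_eq_zero.mp ((mul_eq_zero.mp this).resolve_left (hsum i j hij))
  have : (d i - d j) * S i j = 0 := by linear_combination -e₁ - d j * hsymm_ij
  exact (mul_eq_zero.mp this).resolve_left (sub_ne_zero.mpr (hd.ne hij))

theorem eq_one_or_eq_neg_one_of_diagonal_transpose_mul_self [DecidableEq n] [CommRing R]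
    [NoZeroDivisors R] {s : n → R} (hs : (diagonal s)ᵀ * diagonal s = 1) (i : n) :
    s i = 1 ∨ s i = -1 := by
  rw [diagonal_transpose, diagonal_mul_diagonal, ← diagonal_one] at hs
  exact mul_self_eq_one_iff.mp (congrFun (diagonal_injective hs) i)

theorem IsHermitian.iInf_eigenvalues_le_of_mem_spectrum {𝕜 : Type*} [RCLike 𝕜] [DecidableEq n]
    {A : Matrix n n 𝕜} (hA : A.IsHermitian) {μ : ℝ} (hμ : μ ∈ spectrum ℝ A) :
    ⨅ i, hA.eigenvalues i ≤ μ := by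
  obtain ⟨i, rfl⟩ := hA.spectrum_real_eq_range_eigenvalues ▸ hμ
  exact ciInf_le (Set.finite_range _).bddBelow i

theorem IsHermitian.sub_eigenvalues_mem_spectrum_smul_one_sub {𝕜 : Type*} [RCLike 𝕜]
    [DecidableEq n] {A : Matrix n n 𝕜} (hA : A.IsHermitian) (c : ℝ) (i : n) :
    c - hA.eigenvalues i ∈ spectrum ℝ (c • (1 : Matrix n n 𝕜) - A) := by
  rw [← Algebra.algebraMap_eq_smul_one, ← spectrum.singleton_sub_eq]
  exact Set.sub_mem_sub rfl (hA.eigenvalues_mem_spectrum_real i)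

theorem PosDef.iInf_eigenvalues_pos [DecidableEq n] [Nonempty n] {A : Matrix n n ℝ}
    (hA : A.PosDef) : 0 < ⨅ i, hA.1.eigenvalues i := by
  obtain ⟨i, hi⟩ := exists_eq_ciInf_of_finite (f := hA.1.eigenvalues)
  exact hi ▸ hA.eigenvalues_pos i

end Matrix

theorem Fin.exists_add_eq_sum_sub {α : Type*} [AddCommGroup α] (d : Fin 3 → α) {i j : Fin 3}
    (hij : i ≠ j) : ∃ k, d i + d j = ∑ l, d l - d k := by
  fin_cases i <;> fin_cases j <;> simp only [ne_eq, not_true_eq_false] at hij <;>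
    simp only [Fin.sum_univ_three, Fin.zero_eta, Fin.mk_one, Fin.reduceFinMk]
  exacts [⟨2, by abel⟩, ⟨1, by abel⟩, ⟨2, by abel⟩, ⟨0, by abel⟩, ⟨1, by abel⟩, ⟨0, by abel⟩]

theorem skewPart_eq_zero_iff {A : Matrix (Fin 3) (Fin 3) ℝ} : skewPart A = 0 ↔ A.IsSymm := by
  rw [skewPart, smul_eq_zero, sub_eq_zero, IsSymm, eq_comm (a := A)]
  norm_num

theorem transpose_mul_mul_mem_SO3 {Q R : Matrix (Fin 3) (Fin 3) ℝ} (hQ : Qᵀ * Q = 1)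
    (hR : R ∈ SO3) : Qᵀ * R * Q ∈ SO3 := by
  have hQ' : Q * Qᵀ = 1 := mul_eq_one_comm.mp hQ
  refine ⟨?_, ?_⟩
  · simp only [transpose_mul, transpose_transpose, Matrix.mul_assoc]
    rw [← Matrix.mul_assoc Q, hQ', Matrix.one_mul, ← Matrix.mul_assoc Rᵀ, hR.1, Matrix.one_mul, hQ]
  · rw [det_mul, det_mul, hR.2, mul_one, ← det_mul, hQ, det_one]

theorem PsiK_transpose_mul_mul {Q : Matrix (Fin 3) (Fin 3) ℝ} (hQ : Qᵀ * Q = 1)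
    (K R : Matrix (Fin 3) (Fin 3) ℝ) : PsiK (Qᵀ * K * Q) (Qᵀ * R * Q) = PsiK K R := by
  have hQ' : Q * Qᵀ = 1 := mul_eq_one_comm.mp hQ
  have hsub : 1 - Qᵀ * R * Q = Qᵀ * (1 - R) * Q := by
    rw [Matrix.mul_sub, Matrix.sub_mul, Matrix.mul_one, hQ]
  rw [PsiK, PsiK, hsub, transpose_mul_mul_mul_transpose_mul_mul hQ', trace_mul_cycle, hQ',
    Matrix.one_mul]

theorem PsiK_diagonal (d : Fin 3 → ℝ) (S : Matrix (Fin 3) (Fin 3) ℝ) :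
    PsiK (diagonal d) S = 1 / 2 * ∑ i, d i * (1 - S i i) := by
  simp [PsiK, trace, diagonal_mul, Matrix.sub_apply, one_apply]

theorem eq_one_or_exists_half_sum_eq_sum_sub (d s : Fin 3 → ℝ) (hs : ∀ i, s i = 1 ∨ s i = -1)
    (hprod : ∏ i, s i = 1) : s = 1 ∨ ∃ k, 1 / 2 * ∑ i, d i * (1 - s i) = ∑ i, d i - d k := by
  simp only [Fin.prod_univ_three] at hprod
  simp only [Fin.sum_univ_three]
  rcases hs 0 with h0 | h0 <;> rcases hs 1 with h1 | h1 <;> rcases hs 2 with h2 | h2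
  all_goals first
    | (left; ext i; fin_cases i <;> assumption)
    | (norm_num [h0, h1, h2] at hprod; done)
    | (right; refine ⟨0, ?_⟩; rw [h0, h1, h2]; ring1)
    | (right; refine ⟨1, ?_⟩; rw [h0, h1, h2]; ring1)
    | (right; refine ⟨2, ?_⟩; rw [h0, h1, h2]; ring1)

theorem eq_one_of_isSymm_diagonal_mul {d : Fin 3 → ℝ} (hd : Function.Injective d) {m : ℝ}
    (hm : 0 < m) (hle : ∀ k, m ≤ ∑ i, d i - d k) {S : Matrix (Fin 3) (Fin 3) ℝ} (hS : S ∈ SO3)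
    (hsymm : (diagonal d * S).IsSymm) (hlt : PsiK (diagonal d) S < m) : S = 1 := by
  have hsum : ∀ i j, i ≠ j → d i + d j ≠ 0 := fun i j hij => by
    obtain ⟨k, hk⟩ := Fin.exists_add_eq_sum_sub d hij
    exact (hk ▸ hm.trans_le (hle k)).ne'
  have hdiag : diagonal S.diag = S :=
    (isDiag_of_isSymm_diagonal_mul hd hsum (mul_eq_one_comm.mp hS.1) hsymm).diagonal_diag
  have hsign := eq_one_or_eq_neg_one_of_diagonal_transpose_mul_self (hdiag ▸ hS.1)
  have hprod : ∏ i, S.diag i = 1 := by rw [← det_diagonal, hdiag, hS.2]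
  rcases eq_one_or_exists_half_sum_eq_sum_sub d S.diag hsign hprod with h1 | ⟨k, hk⟩
  · rw [← hdiag, h1]
    exact diagonal_one
  · rw [PsiK_diagonal] at hlt
    exact absurd (hk ▸ hlt) (hle k).not_gt

theorem unique_critical_point_in_sublevel_set_general
    (K : Matrix (Fin 3) (Fin 3) ℝ)
    (hK : K.IsHermitian) (hdistinct : Function.Injective hK.eigenvalues)
    (hPD : (K.trace • (1 : Matrix (Fin 3) (Fin 3) ℝ) - K).PosDef) :
    ∀ R ∈ SO3, PsiK K R < (⨅ i, hPD.1.eigenvalues i) →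
      skewPart (K * R) = 0 → R = 1 := by
  intro R hR hlt hcrit
  set Q : Matrix (Fin 3) (Fin 3) ℝ := (hK.eigenvectorUnitary : Matrix (Fin 3) (Fin 3) ℝ)
  have hQ : Qᵀ * Q = 1 := by
    simpa [star_eq_conjTranspose] using Unitary.coe_star_mul_self hK.eigenvectorUnitary
  have hQ' : Q * Qᵀ = 1 := mul_eq_one_comm.mp hQ
  have hdiag : Qᵀ * K * Q = diagonal hK.eigenvalues := by
    simpa [star_eq_conjTranspose, Q] using hK.conjStarAlgAut_star_eigenvectorUnitary
  have hle (k : Fin 3) :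
      ⨅ i, hPD.1.eigenvalues i ≤ ∑ i, hK.eigenvalues i - hK.eigenvalues k := by
    simpa [hK.trace_eq_sum_eigenvalues] using hPD.1.iInf_eigenvalues_le_of_mem_spectrum
      (hK.sub_eigenvalues_mem_spectrum_smul_one_sub _ k)
  have hS : Qᵀ * R * Q = 1 := by
    refine eq_one_of_isSymm_diagonal_mul hdistinct hPD.iInf_eigenvalues_pos hle
      (transpose_mul_mul_mem_SO3 hQ hR) ?_ (by rwa [← hdiag, PsiK_transpose_mul_mul hQ])
    rw [← hdiag, transpose_mul_mul_mul_transpose_mul_mul hQ']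
    exact (skewPart_eq_zero_iff.mp hcrit).transpose_mul_mul Q
  calc R = (Q * Qᵀ) * R * (Q * Qᵀ) := by rw [hQ', Matrix.one_mul, Matrix.mul_one]
    _ = Q * (Qᵀ * R * Q) * Qᵀ := by simp only [Matrix.mul_assoc]
    _ = 1 := by rw [hS, Matrix.mul_one, hQ']

theorem unique_critical_point_in_sublevel_set
    (K : Matrix (Fin 3) (Fin 3) ℝ) (hKsymm : K.IsSymm)
    (hK : K.IsHermitian) (hdistinct : Function.Injective hK.eigenvalues)
    (hPD : (K.trace • (1 : Matrix (Fin 3) (Fin 3) ℝ) - K).PosDef) :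
    ∀ R ∈ SO3, PsiK K R < (⨅ i, hPD.1.eigenvalues i) →
      skewPart (K * R) = 0 → R = 1 :=
  unique_critical_point_in_sublevel_set_general K hK hdistinct hPD
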